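/- arXiv:1102.5065 — 10 statements merged into one kernel-verified Lean document; each statement's English description precedes it below -/
import Mathlib

section
/- For all integers n and k with n ≥ 6 and ⌈(4n-11)/9⌉ ≤ k ≤ (n-5)/2, one has (n-2k-3)·√(1 - 2k/n) / (n-2k-2) ≤ √(1 - (2k+2)/n). -/
/-! With `m = n - 2k` the inequality reads `(m - 3) √(m/n) / (m - 2) ≤ √((m - 2)/n)`; squaring
reduces it to `(m - 3)² m ≤ (m - 2)³`, and the difference of the two sides is `3m - 8`. -/

open Real

theorem sq_sub_three_mul_le_pow_three_sub_two {m : ℝ} (hm : 8 / 3 ≤ m) :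
    (m - 3) ^ 2 * m ≤ (m - 2) ^ 3 := by
  linarith [show (m - 2) ^ 3 - (m - 3) ^ 2 * m = 3 * m - 8 by ring]

theorem sub_three_mul_sqrt_mul_div_le {m c : ℝ} (hm : 8 / 3 ≤ m) (hc : 0 ≤ c) :
    (m - 3) * √(m * c) / (m - 2) ≤ √((m - 2) * c) := by
  have hm2 : 0 < m - 2 := by linarith
  apply le_sqrt_of_sq_le
  rw [div_pow, mul_pow, sq_sqrt (by positivity), div_le_iff₀ (by positivity)]
  calc (m - 3) ^ 2 * (m * c) = (m - 3) ^ 2 * m * c := by ring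
    _ ≤ (m - 2) ^ 3 * c := by
      gcongr; exact sq_sub_three_mul_le_pow_three_sub_two hm
    _ = (m - 2) * c * (m - 2) ^ 2 := by ring

theorem stmt_1_general (n k : ℤ) (hn : 6 ≤ n)
    (hku : (k : ℚ) ≤ ((n : ℚ) - 5) / 2) :
    ((n : ℝ) - 2 * k - 3) * Real.sqrt (1 - 2 * (k : ℝ) / (n : ℝ)) / ((n : ℝ) - 2 * k - 2)
      ≤ Real.sqrt (1 - (2 * (k : ℝ) + 2) / (n : ℝ)) := by
  have hn0 : (0 : ℝ) < n := by exact_mod_cast (by omega : (0 : ℤ) < n)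
  have hm : (8 / 3 : ℝ) ≤ n - 2 * k := by
    have : (k : ℝ) ≤ ((n : ℝ) - 5) / 2 := by exact_mod_cast hku
    linarith
  have h1 : 1 - 2 * (k : ℝ) / n = (n - 2 * k) * (n : ℝ)⁻¹ := by field_simp
  have h2 : 1 - (2 * (k : ℝ) + 2) / n = (n - 2 * k - 2) * (n : ℝ)⁻¹ := by field_simp; ring
  rw [h1, h2]
  exact sub_three_mul_sqrt_mul_div_le hm (inv_nonneg.2 hn0.le)

theorem stmt_1 (n k : ℤ) (hn : 6 ≤ n) (hkl : ⌈(4 * (n : ℚ) - 11) / 9⌉ ≤ k)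
    (hku : (k : ℚ) ≤ ((n : ℚ) - 5) / 2) :
    ((n : ℝ) - 2 * k - 3) * Real.sqrt (1 - 2 * (k : ℝ) / (n : ℝ)) / ((n : ℝ) - 2 * k - 2)
      ≤ Real.sqrt (1 - (2 * (k : ℝ) + 2) / (n : ℝ)) :=
  stmt_1_general n k hn hku
end

section
/- For all integers n and k with n ≥ 6 and ⌈(4n-11)/9⌉ ≤ k ≤ (n-5)/2, the quantity d = (n-2k-3)/(n-2k-2) · √(1-(2k+5/2)/n) - √(1-(2k+9/2)/n) satisfies d > 99 / (4(n+4)·√(n(n-1/2))). -/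
/-!
Put `M = n - 2k - 2`, so that the two radicands are `(M - 1/2)/n` and `(M - 5/2)/n` and the
hypotheses on `k` say exactly `3 ≤ M` and `9M ≤ n + 4`. After clearing the common factor `√n`,
the difference `(M-1)/M · √(M-1/2) - √(M-5/2)` exceeds `(M - 1/4)/(M² √(M-1/2))`: this is the
polynomial inequality `M⁴ (M-1/2)(M-5/2) < ((M-1) M (M-1/2) - (M-1/4))²`, valid for `M ≥ 3`.
Finally `4(n+4) ≥ 36M` and `√(n-1/2) ≥ 3√(M-1/2)` turn this bound into the stated one.
-/

open Real

lemma div_lt_mul_sqrt_sub_sqrt {M : ℝ} (hM : 3 ≤ M) :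
    (M - 1/4) / (M ^ 2 * √(M - 1/2)) < (M - 1) / M * √(M - 1/2) - √(M - 5/2) := by
  set a := √(M - 1/2)
  set b := √(M - 5/2)
  have ha : a ^ 2 = M - 1/2 := sq_sqrt (by linarith)
  have hb : b ^ 2 = M - 5/2 := sq_sqrt (by linarith)
  have ha0 : 0 < a := sqrt_pos.mpr (by linarith)
  have hC : 0 < (M - 1) * M * (M - 1/2) - (M - 1/4) := by
    nlinarith [mul_nonneg (sub_nonneg.mpr hM) (sq_nonneg (M - 3))]
  have hab : M ^ 2 * (a * b) < (M - 1) * M * (M - 1/2) - (M - 1/4) := by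
    refine lt_of_pow_lt_pow_left₀ 2 hC.le ?_
    calc (M ^ 2 * (a * b)) ^ 2 = M ^ 4 * ((M - 1/2) * (M - 5/2)) := by
          rw [mul_pow, mul_pow, ha, hb]; ring
      _ < ((M - 1) * M * (M - 1/2) - (M - 1/4)) ^ 2 := by
          nlinarith [mul_nonneg (sub_nonneg.mpr hM) (sq_nonneg (M - 3)),
            pow_nonneg (sub_nonneg.mpr hM) 3]
  rw [div_lt_iff₀ (by positivity)]
  have expand : ((M - 1) / M * a - b) * (M ^ 2 * a) = (M - 1) * M * a ^ 2 - M ^ 2 * (a * b) := by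
    field_simp
  rw [expand, ha]
  linarith

lemma div_le_div_mul_sqrt {M N : ℝ} (hM : 3 ≤ M) (hMN : 9 * M ≤ N + 4) :
    99 / (4 * (N + 4) * √(N - 1/2)) ≤ (M - 1/4) / (M ^ 2 * √(M - 1/2)) := by
  have ha0 : 0 < √(M - 1/2) := sqrt_pos.mpr (by linarith)
  have ht0 : 0 < √(N - 1/2) := sqrt_pos.mpr (by linarith)
  have hN4 : 0 < N + 4 := by linarith
  have hsqrt : 3 * √(M - 1/2) ≤ √(N - 1/2) := by
    refine le_sqrt_of_sq_le ?_
    rw [mul_pow, sq_sqrt (by linarith)]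
    linarith
  rw [div_le_div_iff₀ (by positivity) (by positivity)]
  calc 99 * (M ^ 2 * √(M - 1/2)) ≤ (M - 1/4) * (36 * M) * (3 * √(M - 1/2)) := by
        nlinarith [mul_nonneg (mul_nonneg ha0.le (by linarith : (0 : ℝ) ≤ M)) (sub_nonneg.mpr hM)]
    _ ≤ (M - 1/4) * (4 * (N + 4)) * √(N - 1/2) := by
        have hM' : 0 ≤ M - 1/4 := by linarith
        exact mul_le_mul (mul_le_mul_of_nonneg_left (by linarith) hM') hsqrt (by positivity)
          (by positivity)
    _ = (M - 1/4) * (4 * (N + 4) * √(N - 1/2)) := by ring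

lemma div_lt_mul_sqrt_div_sub_sqrt_div {M N : ℝ} (hM : 3 ≤ M) (hMN : 9 * M ≤ N + 4) :
    99 / (4 * (N + 4) * √(N * (N - 1/2)))
      < (M - 1) / M * √((M - 1/2) / N) - √((M - 5/2) / N) := by
  have hN : 0 ≤ N := by linarith
  have hsN : 0 < √N := sqrt_pos.mpr (by linarith)
  rw [sqrt_div' _ hN, sqrt_div' _ hN, sqrt_mul hN, mul_comm (√N), ← mul_assoc, ← div_div,
    mul_div_assoc', ← sub_div]
  exact div_lt_div_of_pos_right
    ((div_le_div_mul_sqrt hM hMN).trans_lt (div_lt_mul_sqrt_sub_sqrt hM)) hsN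

theorem stmt_2_general (n k : ℤ) (hkl : ⌈(4 * (n : ℚ) - 11) / 9⌉ ≤ k)
    (hku : (k : ℚ) ≤ ((n : ℚ) - 5) / 2) :
    ((n : ℝ) - 2 * k - 3) / ((n : ℝ) - 2 * k - 2)
        * Real.sqrt (1 - (2 * (k : ℝ) + 5 / 2) / (n : ℝ))
      - Real.sqrt (1 - (2 * (k : ℝ) + 9 / 2) / (n : ℝ))
      > 99 / (4 * ((n : ℝ) + 4) * Real.sqrt ((n : ℝ) * ((n : ℝ) - 1 / 2))) := by
  have hlower : 4 * n - 11 ≤ 9 * k := by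
    have := Int.ceil_le.mp hkl
    qify; linarith
  have hupper : 2 * k ≤ n - 5 := by
    qify; linarith
  have hM : (3 : ℝ) ≤ n - 2 * k - 2 := by
    exact_mod_cast (show (3 : ℤ) ≤ n - 2 * k - 2 by omega)
  have hMN : 9 * ((n : ℝ) - 2 * k - 2) ≤ n + 4 := by
    exact_mod_cast (show 9 * (n - 2 * k - 2) ≤ n + 4 by omega)
  have hn0 : (n : ℝ) ≠ 0 := by linarith
  have e1 : 1 - (2 * (k : ℝ) + 5 / 2) / n = ((n - 2 * k - 2) - 1/2) / n := by field_simp; ring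
  have e2 : 1 - (2 * (k : ℝ) + 9 / 2) / n = ((n - 2 * k - 2) - 5/2) / n := by field_simp; ring
  rw [e1, e2, show (n : ℝ) - 2 * k - 3 = (n - 2 * k - 2) - 1 by ring]
  exact div_lt_mul_sqrt_div_sub_sqrt_div hM hMN

theorem stmt_2 (n k : ℤ) (hn : 6 ≤ n) (hkl : ⌈(4 * (n : ℚ) - 11) / 9⌉ ≤ k)
    (hku : (k : ℚ) ≤ ((n : ℚ) - 5) / 2) :
    ((n : ℝ) - 2 * k - 3) / ((n : ℝ) - 2 * k - 2)
        * Real.sqrt (1 - (2 * (k : ℝ) + 5 / 2) / (n : ℝ))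
      - Real.sqrt (1 - (2 * (k : ℝ) + 9 / 2) / (n : ℝ))
      > 99 / (4 * ((n : ℝ) + 4) * Real.sqrt ((n : ℝ) * ((n : ℝ) - 1 / 2))) :=
  stmt_2_general n k hkl hku
end

section
/- Let n ≥ 3 and define m = ⌈(4n-11)/9⌉, u_{m-1} = 3·C(m+1,2) + 3·C(m+1-⌊n/3⌋,2) - 3·(m-⌊n/3⌋)·(n/3-⌊n/3⌋), and u_k = ⌈(C(n,2) + (n-2k-3)·u_{k-1})/(n-2k-2)⌉ for k ≥ m. Then for every k with m-1 ≤ k ≤ (n-5)/2, (C(n,2) - u_k)/(C(n,2) - u_{m-1}) ≤ 3·√(1 - (2k+2)/n). -/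
/-!
Write `d k = C(n,2) - u_k`. Since `u_k` is at least the weighted average of `C(n,2)` and `u_{k-1}`
with weights `1` and `a - 1` over `a = n - 2k - 2`, the gaps satisfy `d k ≤ d (k-1) · (a-1)/a`.
Each factor `(a-1)/a` is at most `√((a-1)/(a+1))`, and these square roots telescope, so
`d k / d (m-1) ≤ √((n-2k-3)/(n-2m-1))`. The choice `m = ⌈(4n-11)/9⌉` makes
`9(n-2m-1) ≥ n-3`, which is what bounds the last square root by `3 √((n-2k-2)/n)`.
-/

/-- The binomial-type expression C(x,2) = x(x-1)/2 for rational x. -/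
def C2 (x : ℚ) : ℚ := x * (x - 1) / 2

open Real

theorem ceil_four_mul_sub_eleven_div_nine_bounds (n : ℤ) :
    4 * n - 11 ≤ 9 * ⌈(4 * (n : ℚ) - 11) / 9⌉ ∧
      9 * ⌈(4 * (n : ℚ) - 11) / 9⌉ ≤ 4 * n - 3 := by
  set m := ⌈(4 * (n : ℚ) - 11) / 9⌉
  have hle : (4 * (n : ℚ) - 11) / 9 ≤ m := Int.le_ceil _
  have hlt : (m : ℚ) < (4 * (n : ℚ) - 11) / 9 + 1 := Int.ceil_lt_add_one _
  have hlt' : 9 * m < 4 * n - 2 := by exact_mod_cast (by linarith : 9 * (m : ℚ) < 4 * n - 2)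
  exact ⟨by exact_mod_cast (by linarith : 4 * (n : ℚ) - 11 ≤ 9 * m), by omega⟩

theorem sub_le_mul_sub_of_add_mul_div_le {K : Type*} [Field K] [LinearOrder K]
    [IsStrictOrderedRing K] {N x y a : K} (ha : 0 < a) (h : (N + (a - 1) * x) / a ≤ y) :
    N - y ≤ (N - x) * ((a - 1) / a) := by
  rw [div_le_iff₀ ha] at h
  rw [← mul_div_assoc, le_div_iff₀ ha]
  linarith

theorem sqrt_add_one_mul_div_le_sqrt_sub_one {a : ℝ} (ha : 1 ≤ a) :
    √(a + 1) * ((a - 1) / a) ≤ √(a - 1) := by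
  have hnonneg : 0 ≤ √(a + 1) * ((a - 1) / a) :=
    mul_nonneg (sqrt_nonneg _) (div_nonneg (by linarith) (by linarith))
  rw [le_sqrt hnonneg (by linarith), mul_pow, sq_sqrt (by linarith), div_pow, mul_div_assoc',
    div_le_iff₀ (by positivity)]
  nlinarith

theorem mul_sqrt_le_mul_sqrt_of_le_mul_div {d : ℤ → ℝ} {c : ℝ} {k₀ : ℤ}
    (hd : 0 ≤ d k₀)
    (hstep : ∀ j, k₀ < j → 2 * (j : ℝ) + 1 ≤ c →
      d j ≤ d (j - 1) * ((c - 2 * j - 1) / (c - 2 * j)))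
    {k : ℤ} (hk : k₀ ≤ k) (hkc : 2 * (k : ℝ) + 1 ≤ c) :
    d k * √(c - 2 * k₀ - 1) ≤ d k₀ * √(c - 2 * k - 1) := by
  induction k, hk using Int.leInduction with
  | base => rfl
  | succ k hk ih =>
    push_cast at hkc ⊢
    have hj := hstep (k + 1) (by omega) (by push_cast; linarith)
    push_cast at hj
    rw [add_sub_cancel_right] at hj
    set a := c - 2 * ((k : ℝ) + 1)
    have ha : 1 ≤ a := by linarith
    have hsucc : c - 2 * (k : ℝ) - 1 = a + 1 := by ring
    rw [hsucc] at ih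
    specialize ih (by linarith)
    calc d (k + 1) * √(c - 2 * k₀ - 1)
        ≤ d k * ((a - 1) / a) * √(c - 2 * k₀ - 1) := by gcongr
      _ = d k * √(c - 2 * k₀ - 1) * ((a - 1) / a) := by ring
      _ ≤ d k₀ * √(a + 1) * ((a - 1) / a) := by gcongr
      _ = d k₀ * (√(a + 1) * ((a - 1) / a)) := by ring
      _ ≤ d k₀ * √(a - 1) := by gcongr; exact sqrt_add_one_mul_div_le_sqrt_sub_one ha

theorem mul_sub_three_le_nine_mul {n m k : ℝ} (hm : 9 * m ≤ 4 * n - 3) (hmk : m - 1 ≤ k)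
    (hkn : 2 * k ≤ n - 5) :
    n * (n - 2 * k - 3) ≤ 9 * (n - 2 * m - 1) * (n - 2 * k - 2) := by
  -- with `b = n - 2k - 2`: use `9 (n - 2m - 1) ≥ n - 3` if `3b ≤ n`,
  -- and `n - 2m - 1 ≥ b - 1` otherwise
  rcases le_or_gt (3 * (n - 2 * k - 2)) n with h | h
  · nlinarith [mul_nonneg (by linarith : 0 ≤ 9 * (n - 2 * m - 1) - (n - 3))
      (by linarith : 0 ≤ n - 2 * k - 2)]
  · nlinarith [mul_nonneg (by linarith : 0 ≤ (n - 2 * m - 1) - (n - 2 * k - 3))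
      (by linarith : 0 ≤ 9 * (n - 2 * k - 2)),
      mul_nonneg (by linarith : 0 ≤ n - 2 * k - 3) (by linarith : 0 ≤ 9 * (n - 2 * k - 2) - n)]

theorem sqrt_div_sqrt_le_three_mul_sqrt {n m k : ℝ} (hm₁ : 4 * n - 11 ≤ 9 * m)
    (hm₂ : 9 * m ≤ 4 * n - 3) (hmk : m - 1 ≤ k) (hkn : 2 * k ≤ n - 5) :
    √(n - 2 * k - 3) / √(n - 2 * m - 1) ≤ 3 * √(1 - (2 * k + 2) / n) := by
  have hn : 0 < n := by linarith
  have hB : 0 < n - 2 * m - 1 := by linarith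
  have hnine : (3 : ℝ) = √9 := by rw [show (9 : ℝ) = 3 ^ 2 by norm_num, sqrt_sq (by norm_num)]
  have hrw : 9 * (1 - (2 * k + 2) / n) * (n - 2 * m - 1)
      = 9 * (n - 2 * m - 1) * (n - 2 * k - 2) / n := by
    field_simp
    ring
  rw [← sqrt_div' _ hB.le, hnine, ← sqrt_mul (by norm_num)]
  apply sqrt_le_sqrt
  rw [div_le_iff₀ hB, hrw, le_div_iff₀ hn]
  nlinarith [mul_sub_three_le_nine_mul hm₂ hmk hkn]

theorem stmt_6_general (n : ℤ) (m : ℤ) (hm : m = ⌈(4 * (n : ℚ) - 11) / 9⌉)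
    (u : ℤ → ℚ)
    (hrec : ∀ k : ℤ, m ≤ k →
      u k = (⌈((n : ℚ) * ((n : ℚ) - 1) / 2 + ((n : ℚ) - 2 * k - 3) * u (k - 1))
              / ((n : ℚ) - 2 * k - 2)⌉ : ℚ))
    (hpos : 0 < (n : ℚ) * ((n : ℚ) - 1) / 2 - u (m - 1)) :
    ∀ k : ℤ, m - 1 ≤ k → (k : ℚ) ≤ ((n : ℚ) - 5) / 2 →
      (((n : ℚ) * ((n : ℚ) - 1) / 2 - u k : ℚ) : ℝ)
          / (((n : ℚ) * ((n : ℚ) - 1) / 2 - u (m - 1) : ℚ) : ℝ)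
        ≤ 3 * Real.sqrt (1 - (2 * (k : ℝ) + 2) / (n : ℝ)) := by
  intro k hmk hkn
  obtain ⟨hm₁, hm₂⟩ := hm ▸ ceil_four_mul_sub_eleven_div_nine_bounds n
  set d : ℤ → ℝ := fun j ↦ ((n * (n - 1) / 2 - u j : ℚ) : ℝ)
  have hd : 0 < d (m - 1) := Rat.cast_pos.mpr hpos
  have hmkR : (m : ℝ) - 1 ≤ k := by exact_mod_cast hmk
  have hknR : 2 * (k : ℝ) ≤ n - 5 := by
    have : 2 * (k : ℚ) ≤ n - 5 := by linarith
    exact_mod_cast this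
  have hstep : ∀ j, m - 1 < j → 2 * (j : ℝ) + 1 ≤ (n - 2 : ℝ) →
      d j ≤ d (j - 1) * (((n - 2 : ℝ) - 2 * j - 1) / ((n - 2 : ℝ) - 2 * j)) := by
    intro j hj hjn
    have hden : (0 : ℚ) < n - 2 * j - 2 := by
      exact_mod_cast (by linarith : (0 : ℝ) < n - 2 * j - 2)
    have hceil : (n * (n - 1) / 2 + ((n - 2 * j - 2 : ℚ) - 1) * u (j - 1)) / (n - 2 * j - 2)
        ≤ u j := by
      rw [hrec j (by omega)]
      exact (le_of_eq (by ring)).trans (Int.le_ceil _)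
    refine (Rat.cast_le.mpr (sub_le_mul_sub_of_add_mul_div_le hden hceil)).trans_eq ?_
    simp only [d]
    push_cast
    ring
  have hdecay := mul_sqrt_le_mul_sqrt_of_le_mul_div hd.le hstep hmk (by linarith)
  have hfirst : (n - 2 : ℝ) - 2 * ((m - 1 : ℤ) : ℝ) - 1 = n - 2 * m - 1 := by push_cast; ring
  have hlast : (n - 2 : ℝ) - 2 * k - 1 = n - 2 * k - 3 := by ring
  rw [hfirst, hlast] at hdecay
  calc d k / d (m - 1) ≤ √(n - 2 * k - 3) / √(n - 2 * m - 1) := by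
        rw [div_le_div_iff₀ hd (sqrt_pos.2 (by linarith))]
        linarith
    _ ≤ 3 * √(1 - (2 * k + 2) / n) :=
        sqrt_div_sqrt_le_three_mul_sqrt (by exact_mod_cast hm₁) (by exact_mod_cast hm₂)
          hmkR hknR

theorem stmt_6 (n : ℤ) (hn : 3 ≤ n) (m : ℤ) (hm : m = ⌈(4 * (n : ℚ) - 11) / 9⌉)
    (u : ℤ → ℚ)
    (hum : u (m - 1) = 3 * C2 ((m : ℚ) + 1) + 3 * C2 ((m : ℚ) + 1 - (⌊(n : ℚ) / 3⌋ : ℚ))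
        - 3 * ((m : ℚ) - (⌊(n : ℚ) / 3⌋ : ℚ)) * ((n : ℚ) / 3 - (⌊(n : ℚ) / 3⌋ : ℚ)))
    (hrec : ∀ k : ℤ, m ≤ k →
      u k = (⌈((n : ℚ) * ((n : ℚ) - 1) / 2 + ((n : ℚ) - 2 * k - 3) * u (k - 1))
              / ((n : ℚ) - 2 * k - 2)⌉ : ℚ))
    (hpos : 0 < (n : ℚ) * ((n : ℚ) - 1) / 2 - u (m - 1)) :
    ∀ k : ℤ, m - 1 ≤ k → (k : ℚ) ≤ ((n : ℚ) - 5) / 2 →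
      (((n : ℚ) * ((n : ℚ) - 1) / 2 - u k : ℚ) : ℝ)
          / (((n : ℚ) * ((n : ℚ) - 1) / 2 - u (m - 1) : ℚ) : ℝ)
        ≤ 3 * Real.sqrt (1 - (2 * (k : ℝ) + 2) / (n : ℝ)) :=
  stmt_6_general n m hm u hrec hpos
end

section
/- Let n ≥ 3 and define m = ⌈(4n-11)/9⌉, u_{m-1} = 3·C(m+1,2) + 3·C(m+1-⌊n/3⌋,2) - 3·(m-⌊n/3⌋)·(n/3-⌊n/3⌋), and u_k = ⌈(C(n,2) + (n-2k-3)·u_{k-1})/(n-2k-2)⌉ for k ≥ m. Then for every k with m-1 ≤ k ≤ (n-5)/2, 3·√(1 - (2k+9/2)/n) < (C(n,2) - u_k)/(C(n,2) - u_{m-1}). -/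
section OrderedField

variable {K : Type*} [Field K] [LinearOrder K] [IsStrictOrderedRing K]

theorem quadratic_le_initial_gap {N M : K} (F : K) (hM₁ : 4 * N - 11 ≤ 9 * M)
    (hM₂ : 9 * M < 4 * N - 2) (hMN : 2 * M + 3 ≤ N) :
    (N + 4) * (20 * N - 1) ≤ 891 * (N * (N - 1) / 2 - (3 * ((M + 1) * M / 2)
      + 3 * ((M + 1 - F) * (M - F) / 2) - 3 * (M - F) * (N / 3 - F))) := by
  have hM : 0 ≤ (9 * M - (4 * N - 11)) * (4 * N - 2 - 9 * M) :=
    mul_nonneg (by linarith) (by linarith)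
  nlinarith [sq_nonneg (3 * F - N), sq_nonneg (3 * F - N + 3)]

theorem cubic_le_of_quadratic_le {N a v : K} (ha : 3 ≤ a) (haN : 9 * a ≤ N + 4)
    (hv : (N + 4) * (20 * N - 1) ≤ 891 * v) :
    2 * a ^ 2 * (N + a - 1 / 2) ≤ 3 * v * (4 * a - 1) := by
  have hv₀ : 0 < v := by nlinarith
  have h₁ : 0 ≤ 2 * a * ((N + 4) / 9 - a) * (N + (N + 4) / 9 + a - 1 / 2) :=
    mul_nonneg (mul_nonneg (by linarith) (by linarith)) (by linarith)
  have h₂ : 0 ≤ v * (a - 3) := mul_nonneg hv₀.le (by linarith)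
  have h₃ : 0 ≤ (891 * v - (N + 4) * (20 * N - 1)) * a := mul_nonneg (by linarith) (by linarith)
  nlinarith

theorem sub_ceil_div_gt [FloorRing K] {a c x : K} (ha : 0 < a) :
    (a - 1) / a * (c - x) - 1 < c - ⌈(c + (a - 1) * x) / a⌉ := by
  have h := Int.ceil_lt_add_one ((c + (a - 1) * x) / a)
  have e : c - (c + (a - 1) * x) / a = (a - 1) / a * (c - x) := by field_simp; ring
  linarith

end OrderedField

theorem two_mul_mul_sqrt_le {n a : ℝ} (hn : 0 < n) (ha : 1 / 2 ≤ a) :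
    2 * n * √((2 * a - 1) / (2 * n)) ≤ n + a - 1 / 2 := by
  have hs : √((2 * a - 1) / (2 * n)) ^ 2 = (2 * a - 1) / (2 * n) :=
    Real.sq_sqrt (div_nonneg (by linarith) (by linarith))
  have hsq : (2 * n * √((2 * a - 1) / (2 * n))) ^ 2 = 2 * n * (2 * a - 1) := by
    rw [mul_pow, hs]; field_simp
  nlinarith [sq_nonneg (n - a + 1 / 2), Real.sqrt_nonneg ((2 * a - 1) / (2 * n))]

theorem sqrt_bound_step {n a v : ℝ} (hn : 0 < n) (ha : 3 ≤ a)
    (hv : 2 * a ^ 2 * (n + a - 1 / 2) ≤ 3 * v * (4 * a - 1)) :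
    3 * √((2 * a - 5) / (2 * n)) * v + 1 ≤ (a - 1) / a * (3 * √((2 * a - 1) / (2 * n)) * v) := by
  set s := √((2 * a - 1) / (2 * n))
  set t := √((2 * a - 5) / (2 * n))
  have hs : s ^ 2 = (2 * a - 1) / (2 * n) := Real.sq_sqrt (div_nonneg (by linarith) (by linarith))
  have ht : t ^ 2 = (2 * a - 5) / (2 * n) := Real.sq_sqrt (div_nonneg (by linarith) (by linarith))
  have hs₀ : 0 < s := Real.sqrt_pos.mpr (div_pos (by linarith) (by linarith))
  have ht₀ : 0 ≤ t := Real.sqrt_nonneg _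
  have hts : t ≤ s := Real.sqrt_le_sqrt (by gcongr; linarith)
  set d := (a - 1) * s - a * t
  have hd : 2 * n * d * ((a - 1) * s + a * t) = 4 * a - 1 := by
    have e : d * ((a - 1) * s + a * t) = (a - 1) ^ 2 * s ^ 2 - a ^ 2 * t ^ 2 := by ring
    rw [mul_assoc, e, hs, ht]; field_simp; ring
  have hsum₀ : 0 < (a - 1) * s + a * t := by
    nlinarith [mul_pos (by linarith : (0 : ℝ) < a - 1) hs₀,
      mul_nonneg (by linarith : (0 : ℝ) ≤ a) ht₀]
  have hsum : (a - 1) * s + a * t ≤ 2 * a * s := by nlinarith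
  have hd₀ : 0 < d := by nlinarith [mul_pos hn hsum₀]
  have h₁ : 4 * a - 1 ≤ d * (2 * a) * (2 * n * s) := by
    nlinarith [mul_le_mul_of_nonneg_left hsum (by positivity : 0 ≤ 2 * n * d)]
  have h₂ : d * (2 * a) * (2 * n * s) ≤ d * (2 * a) * (n + a - 1 / 2) :=
    mul_le_mul_of_nonneg_left (two_mul_mul_sqrt_le hn (by linarith)) (by positivity)
  have h₃ : a ≤ 3 * v * d := by nlinarith
  rw [div_mul_eq_mul_div, le_div_iff₀ (by linarith)]
  nlinarith

theorem sqrt_lt_div_of_recurrence {n : ℝ} {m : ℤ} {w : ℤ → ℝ}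
    (hm : 4 * n - 11 ≤ 9 * m) (hw : (n + 4) * (20 * n - 1) ≤ 891 * w (m - 1))
    (hstep : ∀ k : ℤ, m ≤ k → (k : ℝ) ≤ (n - 5) / 2 →
      (n - 2 * k - 3) / (n - 2 * k - 2) * w (k - 1) - 1 < w k)
    (k : ℤ) (hk : m - 1 ≤ k) (hkn : (k : ℝ) ≤ (n - 5) / 2) :
    3 * √(1 - (2 * k + 9 / 2) / n) < w k / w (m - 1) := by
  have hn : 5 ≤ n := by
    have : (m : ℝ) - 1 ≤ k := by exact_mod_cast hk
    linarith
  have hw₀ : 0 < w (m - 1) := by nlinarith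
  rw [lt_div_iff₀ hw₀]
  induction k, hk using Int.leInduction with
  | base =>
    have h : √(1 - (2 * ((m - 1 : ℤ) : ℝ) + 9 / 2) / n) < 1 / 3 := by
      rw [Real.sqrt_lt' (by norm_num), div_pow, one_pow, sub_lt_iff_lt_add, ← sub_lt_iff_lt_add',
        lt_div_iff₀ (by linarith)]
      push_cast
      linarith
    nlinarith
  | succ k hk ih =>
    push_cast at hkn ⊢
    set a : ℝ := n - 2 * k - 4
    have ha : 3 ≤ a := by linarith
    have haN : 9 * a ≤ n + 4 := by
      have : (m : ℝ) ≤ k + 1 := by exact_mod_cast (by omega : m ≤ k + 1)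
      linarith
    have hprev : 1 - (2 * (k : ℝ) + 9 / 2) / n = (2 * a - 1) / (2 * n) := by
      field_simp; ring
    have hnext : 1 - (2 * ((k : ℝ) + 1) + 9 / 2) / n = (2 * a - 5) / (2 * n) := by
      field_simp; ring
    have hrec := hstep (k + 1) (by omega) (by push_cast; linarith)
    rw [add_sub_cancel_right] at hrec
    push_cast at hrec
    rw [show n - 2 * (k + 1) - 3 = a - 1 by ring, show n - 2 * (k + 1) - 2 = a by ring] at hrec
    have hsqrt := sqrt_bound_step (by linarith) ha (cubic_le_of_quadratic_le ha haN hw)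
    have hprev_bound := mul_lt_mul_of_pos_left (hprev ▸ ih (by linarith))
      (div_pos (by linarith) (by linarith) : 0 < (a - 1) / a)
    rw [hnext]
    linarith

theorem stmt_7_general (n : ℤ) (m : ℤ) (hm : m = ⌈(4 * (n : ℚ) - 11) / 9⌉)
    (u : ℤ → ℚ)
    (hum : u (m - 1) = 3 * C2 ((m : ℚ) + 1) + 3 * C2 ((m : ℚ) + 1 - (⌊(n : ℚ) / 3⌋ : ℚ))
        - 3 * ((m : ℚ) - (⌊(n : ℚ) / 3⌋ : ℚ)) * ((n : ℚ) / 3 - (⌊(n : ℚ) / 3⌋ : ℚ)))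
    (hrec : ∀ k : ℤ, m ≤ k →
      u k = (⌈((n : ℚ) * ((n : ℚ) - 1) / 2 + ((n : ℚ) - 2 * k - 3) * u (k - 1))
              / ((n : ℚ) - 2 * k - 2)⌉ : ℚ))
     :
    ∀ k : ℤ, m - 1 ≤ k → (k : ℚ) ≤ ((n : ℚ) - 5) / 2 →
      3 * Real.sqrt (1 - (2 * (k : ℝ) + 9 / 2) / (n : ℝ))
        < (((n : ℚ) * ((n : ℚ) - 1) / 2 - u k : ℚ) : ℝ)
            / (((n : ℚ) * ((n : ℚ) - 1) / 2 - u (m - 1) : ℚ) : ℝ) := by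
  intro k hk hkn
  have hm₁ : 4 * (n : ℚ) - 11 ≤ 9 * m := by
    linarith [hm ▸ Int.le_ceil ((4 * (n : ℚ) - 11) / 9)]
  have hm₂ : 9 * (m : ℚ) < 4 * n - 2 := by
    linarith [hm ▸ Int.ceil_lt_add_one ((4 * (n : ℚ) - 11) / 9)]
  have hw : ((n : ℚ) + 4) * (20 * n - 1) ≤ 891 * ((n : ℚ) * (n - 1) / 2 - u (m - 1)) := by
    have hmk : (m : ℚ) - 1 ≤ k := by exact_mod_cast hk
    rw [hum]
    simp only [C2]
    linarith [quadratic_le_initial_gap (⌊(n : ℚ) / 3⌋ : ℚ) hm₁ hm₂ (by linarith)]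
  have hstep : ∀ j : ℤ, m ≤ j → (j : ℚ) ≤ (n - 5) / 2 →
      ((n : ℚ) - 2 * j - 3) / (n - 2 * j - 2) * ((n : ℚ) * (n - 1) / 2 - u (j - 1)) - 1
        < (n : ℚ) * (n - 1) / 2 - u j := by
    intro j hj hjn
    rw [hrec j hj, show (n : ℚ) - 2 * j - 3 = (n - 2 * j - 2) - 1 by ring]
    exact sub_ceil_div_gt (by linarith)
  refine sqrt_lt_div_of_recurrence (w := fun j => (((n : ℚ) * (n - 1) / 2 - u j : ℚ) : ℝ))
    (by exact_mod_cast hm₁) (by exact_mod_cast hw) (fun j hj hjn => ?_) k hk (by exact_mod_cast hkn)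
  exact_mod_cast hstep j hj (by exact_mod_cast hjn)

theorem stmt_7 (n : ℤ) (hn : 3 ≤ n) (m : ℤ) (hm : m = ⌈(4 * (n : ℚ) - 11) / 9⌉)
    (u : ℤ → ℚ)
    (hum : u (m - 1) = 3 * C2 ((m : ℚ) + 1) + 3 * C2 ((m : ℚ) + 1 - (⌊(n : ℚ) / 3⌋ : ℚ))
        - 3 * ((m : ℚ) - (⌊(n : ℚ) / 3⌋ : ℚ)) * ((n : ℚ) / 3 - (⌊(n : ℚ) / 3⌋ : ℚ)))
    (hrec : ∀ k : ℤ, m ≤ k →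
      u k = (⌈((n : ℚ) * ((n : ℚ) - 1) / 2 + ((n : ℚ) - 2 * k - 3) * u (k - 1))
              / ((n : ℚ) - 2 * k - 2)⌉ : ℚ))
     :
    ∀ k : ℤ, m - 1 ≤ k → (k : ℚ) ≤ ((n : ℚ) - 5) / 2 →
      3 * Real.sqrt (1 - (2 * (k : ℝ) + 9 / 2) / (n : ℝ))
        < (((n : ℚ) * ((n : ℚ) - 1) / 2 - u k : ℚ) : ℝ)
            / (((n : ℚ) * ((n : ℚ) - 1) / 2 - u (m - 1) : ℚ) : ℝ) :=
  stmt_7_general n m hm u hum hrec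
end

section
/- Let n ≥ 3 and define m, u_{m-1}, u_k as in the recursive lower-bound sequence for (≤k)-edges. Then for every k with m ≤ k ≤ (n-5)/2, 3·√(1-(2k+9/2)/n)·(C(n,2) - u_{m-1}) ≥ (n-1)(n-2k-3). -/
section

variable {K : Type*} [Field K] [LinearOrder K] [IsStrictOrderedRing K]

lemma mul_sq_le_of_endpoints {c p q a b t : K} (hc : 0 ≤ c) (hat : a ≤ t) (htb : t ≤ b)
    (ha : c * a ^ 2 ≤ p * a + q) (hb : c * b ^ 2 ≤ p * b + q) : c * t ^ 2 ≤ p * t + q := by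
  rcases hat.eq_or_lt with rfl | hat'
  · exact ha
  have hba : 0 < b - a := by linarith
  rw [← sub_nonneg, ← mul_nonneg_iff_of_pos_left hba]
  have interpolation : (b - a) * (p * t + q - c * t ^ 2) = (b - t) * (p * a + q - c * a ^ 2)
      + (t - a) * (p * b + q - c * b ^ 2) + c * ((t - a) * (b - t) * (b - a)) := by ring
  rw [interpolation]
  exact add_nonneg (add_nonneg (mul_nonneg (sub_nonneg.2 htb) (sub_nonneg.2 ha))
    (mul_nonneg (sub_nonneg.2 hat) (sub_nonneg.2 hb)))
    (mul_nonneg hc (mul_nonneg (mul_nonneg (sub_nonneg.2 hat) (sub_nonneg.2 htb)) hba.le))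

/-- The minimum of `C(n,2) - u_{m-1}` over all values of `⌊n/3⌋`, attained at `n/3 - 1/2`. -/
def minDeficit (n m : K) : K :=
  n * (n - 1) / 2 - 3 / 2 * (m * (m + 1) + (m - n / 3) * (m - n / 3 + 1)) - 3 / 8

lemma exists_nonneg_coords {n m : K} (hm : 4 * n - 11 ≤ 9 * m) (hmn : 2 * m ≤ n - 5) :
    ∃ s i : K, 0 ≤ s ∧ 0 ≤ i ∧ n = 9 * s + 2 * i + 23 ∧ m = 4 * s + i + 9 :=
  ⟨n - 2 * m - 5, 9 * m - 4 * n + 11, by linarith, by linarith, by ring, by ring⟩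

lemma minDeficit_pos {n m : K} (hm : 4 * n - 11 ≤ 9 * m) (hmn : 2 * m ≤ n - 5) :
    0 < minDeficit n m := by
  obtain ⟨s, i, hs, hi, rfl, rfl⟩ := exists_nonneg_coords hm hmn
  unfold minDeficit
  ring_nf
  positivity

lemma mul_sq_le_minDeficit_sq_at_two {n m : K} (hm : 4 * n - 11 ≤ 9 * m)
    (hmn : 2 * m ≤ n - 5) :
    n * (n - 1) ^ 2 * 2 ^ 2 ≤ 9 * minDeficit n m ^ 2 * (2 - 3 / 2) := by
  obtain ⟨s, i, hs, hi, rfl, rfl⟩ := exists_nonneg_coords hm hmn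
  rw [← sub_nonneg]
  unfold minDeficit
  ring_nf
  positivity

lemma mul_sq_le_minDeficit_sq_at_top {n m : K} (hm : 4 * n - 11 ≤ 9 * m)
    (hmn : 2 * m ≤ n - 5) :
    n * (n - 1) ^ 2 * (n - 2 * m - 3) ^ 2
      ≤ 9 * minDeficit n m ^ 2 * (n - 2 * m - 3 - 3 / 2) := by
  obtain ⟨s, i, hs, hi, rfl, rfl⟩ := exists_nonneg_coords hm hmn
  rw [← sub_nonneg]
  unfold minDeficit
  ring_nf
  positivity

lemma mul_sq_le_sq_mul_of_minDeficit_le {n m D t : K} (hm : 4 * n - 11 ≤ 9 * m)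
    (hmn : 2 * m ≤ n - 5) (hD : minDeficit n m ≤ D) (ht : 2 ≤ t) (htm : t ≤ n - 2 * m - 3) :
    n * (n - 1) ^ 2 * t ^ 2 ≤ 9 * D ^ 2 * (t - 3 / 2) := by
  have hsq : minDeficit n m ^ 2 ≤ D ^ 2 := pow_le_pow_left₀ (minDeficit_pos hm hmn).le hD 2
  have hc : 0 ≤ n * (n - 1) ^ 2 := mul_nonneg (by linarith) (sq_nonneg _)
  have htop : 0 ≤ n - 2 * m - 3 - 3 / 2 := by linarith
  refine (mul_sq_le_of_endpoints (p := 9 * D ^ 2) (q := -(27 / 2) * D ^ 2) hc ht htm ?_ ?_).trans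
    (le_of_eq (by ring))
  · linarith [mul_sq_le_minDeficit_sq_at_two hm hmn]
  · linarith [mul_sq_le_minDeficit_sq_at_top hm hmn, mul_le_mul_of_nonneg_right hsq htop]

end

lemma minDeficit_le (n m f : ℚ) :
    minDeficit n m
      ≤ n * (n - 1) / 2 - (3 * C2 (m + 1) + 3 * C2 (m + 1 - f) - 3 * (m - f) * (n / 3 - f)) := by
  have h : n * (n - 1) / 2 - (3 * C2 (m + 1) + 3 * C2 (m + 1 - f) - 3 * (m - f) * (n / 3 - f))
      = minDeficit n m + (n - 3 * f - 3 / 2) ^ 2 / 6 := by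
    unfold C2 minDeficit
    ring
  rw [h]
  exact le_add_of_nonneg_right (by positivity)

lemma sub_one_mul_le_three_mul_sqrt {n k D : ℝ} (hn : 0 < n) (hD : 0 ≤ D)
    (h : n * (n - 1) ^ 2 * (n - 2 * k - 3) ^ 2 ≤ 9 * D ^ 2 * (n - 2 * k - 3 - 3 / 2)) :
    (n - 1) * (n - 2 * k - 3) ≤ 3 * √(1 - (2 * k + 9 / 2) / n) * D :=
  calc (n - 1) * (n - 2 * k - 3) ≤ √((1 - (2 * k + 9 / 2) / n) * (3 * D) ^ 2) := by
        apply Real.le_sqrt_of_sq_le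
        rw [one_sub_div hn.ne', div_mul_eq_mul_div, le_div_iff₀ hn]
        linarith
    _ = 3 * √(1 - (2 * k + 9 / 2) / n) * D := by
        rw [Real.sqrt_mul' _ (sq_nonneg _), Real.sqrt_sq (by positivity)]
        ring

theorem stmt_8_general (n : ℤ) (m : ℤ) (hm : m = ⌈(4 * (n : ℚ) - 11) / 9⌉)
    (u : ℤ → ℚ)
    (hum : u (m - 1) = 3 * C2 ((m : ℚ) + 1) + 3 * C2 ((m : ℚ) + 1 - (⌊(n : ℚ) / 3⌋ : ℚ))
        - 3 * ((m : ℚ) - (⌊(n : ℚ) / 3⌋ : ℚ)) * ((n : ℚ) / 3 - (⌊(n : ℚ) / 3⌋ : ℚ)))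
     :
    ∀ k : ℤ, m ≤ k → (k : ℚ) ≤ ((n : ℚ) - 5) / 2 →
      3 * Real.sqrt (1 - (2 * (k : ℝ) + 9 / 2) / (n : ℝ))
          * (((n : ℚ) * ((n : ℚ) - 1) / 2 - u (m - 1) : ℚ) : ℝ)
        ≥ ((n : ℝ) - 1) * ((n : ℝ) - 2 * k - 3) := by
  intro k hmk hkn
  have hm' : 4 * (n : ℚ) - 11 ≤ 9 * m := by
    have := Int.le_ceil ((4 * (n : ℚ) - 11) / 9)
    rw [← hm] at this
    linarith
  have hmk' : (m : ℚ) ≤ k := by exact_mod_cast hmk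
  have hmn : 2 * (m : ℚ) ≤ n - 5 := by linarith
  have hD : minDeficit (n : ℚ) m ≤ n * (n - 1) / 2 - u (m - 1) := hum ▸ minDeficit_le _ _ _
  have key := mul_sq_le_sq_mul_of_minDeficit_le hm' hmn hD (t := (n : ℚ) - 2 * k - 3)
    (by linarith) (by linarith)
  have hn : (0 : ℚ) < n := by linarith
  have hD0 := (minDeficit_pos hm' hmn).le.trans hD
  refine sub_one_mul_le_three_mul_sqrt (by exact_mod_cast hn) (by exact_mod_cast hD0) ?_
  have keyℝ := (Rat.cast_le (K := ℝ)).2 key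
  push_cast at keyℝ ⊢
  linarith

theorem stmt_8 (n : ℤ) (hn : 3 ≤ n) (m : ℤ) (hm : m = ⌈(4 * (n : ℚ) - 11) / 9⌉)
    (u : ℤ → ℚ)
    (hum : u (m - 1) = 3 * C2 ((m : ℚ) + 1) + 3 * C2 ((m : ℚ) + 1 - (⌊(n : ℚ) / 3⌋ : ℚ))
        - 3 * ((m : ℚ) - (⌊(n : ℚ) / 3⌋ : ℚ)) * ((n : ℚ) / 3 - (⌊(n : ℚ) / 3⌋ : ℚ)))
    (hrec : ∀ k : ℤ, m ≤ k →
      u k = (⌈((n : ℚ) * ((n : ℚ) - 1) / 2 + ((n : ℚ) - 2 * k - 3) * u (k - 1))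
              / ((n : ℚ) - 2 * k - 2)⌉ : ℚ))
     :
    ∀ k : ℤ, m ≤ k → (k : ℚ) ≤ ((n : ℚ) - 5) / 2 →
      3 * Real.sqrt (1 - (2 * (k : ℝ) + 9 / 2) / (n : ℝ))
          * (((n : ℚ) * ((n : ℚ) - 1) / 2 - u (m - 1) : ℚ) : ℝ)
        ≥ ((n : ℝ) - 1) * ((n : ℝ) - 2 * k - 3) :=
  stmt_8_general n m hm u hum
end

section
/- For every integer n ≥ 3, with m = ⌈(4n-11)/9⌉ and u_{m-1} = 3·C(m+1,2) + 3·C(m+1-⌊n/3⌋,2) - 3·(m-⌊n/3⌋)·(n/3-⌊n/3⌋), one has 3·(C(n,2) - u_{m-1}) ≥ (5n² - 25n + 4)/9. -/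
lemma C2_add_one_sub_sub_mul (a f x : ℚ) :
    C2 (a + 1 - f) - (a - f) * (x - f) = C2 (a + 1 - x) + (x - f) * (1 - (x - f)) / 2 := by
  unfold C2; ring

lemma mul_one_sub_le_quarter (s : ℚ) : s * (1 - s) ≤ 1 / 4 := by
  nlinarith [sq_nonneg (2 * s - 1)]

lemma le_mul_ceil_div_and_lt (k d : ℤ) (hd : 0 < d) :
    k ≤ d * ⌈(k : ℚ) / d⌉ ∧ d * ⌈(k : ℚ) / d⌉ < k + d := by
  have hd' : (0 : ℚ) < d := by exact_mod_cast hd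
  have hk : (k : ℚ) = d * ((k : ℚ) / d) := by field_simp
  have hle := mul_le_mul_of_nonneg_left (Int.le_ceil ((k : ℚ) / d)) hd'.le
  have hlt := mul_lt_mul_of_pos_left (Int.ceil_lt_add_one ((k : ℚ) / d)) hd'
  constructor
  · exact_mod_cast (by linarith : (k : ℚ) ≤ d * ⌈(k : ℚ) / d⌉)
  · exact_mod_cast (by linarith : (d : ℚ) * ⌈(k : ℚ) / d⌉ < k + d)

lemma C2_add_one_add_C2_le (x m : ℚ) (hx : 1 ≤ x) (hlo : 4 * x - 11 ≤ 9 * m)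
    (hhi : 9 * m ≤ 4 * x - 3) :
    3 * C2 (m + 1) + 3 * C2 (m + 1 - x / 3) ≤ (17 * x ^ 2 + 15 * x - 36) / 54 := by
  unfold C2
  -- below its chord on the interval, and the chord increases because `x ≥ 1`
  nlinarith [mul_nonneg (sub_nonneg.2 hlo) (sub_nonneg.2 hhi),
    mul_nonneg (sub_nonneg.2 hx) (sub_nonneg.2 hhi)]

theorem stmt_9 (n : ℤ) (hn : 3 ≤ n) (m : ℤ) (hm : m = ⌈(4 * (n : ℚ) - 11) / 9⌉)
    (u : ℚ)
    (hu : u = 3 * C2 ((m : ℚ) + 1) + 3 * C2 ((m : ℚ) + 1 - (⌊(n : ℚ) / 3⌋ : ℚ))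
        - 3 * ((m : ℚ) - (⌊(n : ℚ) / 3⌋ : ℚ)) * ((n : ℚ) / 3 - (⌊(n : ℚ) / 3⌋ : ℚ))) :
    3 * ((n : ℚ) * ((n : ℚ) - 1) / 2 - u) ≥ (5 * (n : ℚ) ^ 2 - 25 * (n : ℚ) + 4) / 9 := by
  obtain ⟨hlo, hhi⟩ : 4 * n - 11 ≤ 9 * m ∧ 9 * m ≤ 4 * n - 3 := by
    have := le_mul_ceil_div_and_lt (4 * n - 11) 9 (by norm_num)
    push_cast at this
    rw [← hm] at this
    omega
  have hn1 : (1 : ℚ) ≤ n := by exact_mod_cast (by omega : (1 : ℤ) ≤ n)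
  have hquad := C2_add_one_add_C2_le n m hn1 (by exact_mod_cast hlo) (by exact_mod_cast hhi)
  have hfrac := mul_one_sub_le_quarter ((n : ℚ) / 3 - ⌊(n : ℚ) / 3⌋)
  have hsplit := C2_add_one_sub_sub_mul m ⌊(n : ℚ) / 3⌋ ((n : ℚ) / 3)
  rw [hu]; linarith
end

section
/- The definite integral 24·∫₀^{4/9} (3/2)(1-2x)(x² + max(0, x-1/3)²) dx + 24·∫_{4/9}^{1/2} (1-2x)(1/2 - (5/9)√(1-2x)) dx equals 86/243 + 19/729 = 277/729. -/
/-!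
Everything is the fundamental theorem of calculus. The positive part `max 0 (x - 1/3)` vanishes
on `[0, 1/3]` and equals `x - 1/3` after it, so the first integrand is polynomial on each piece.
The substitution `u = 1 - 2x` turns the second integral into `∫ u (1/2 - (5/9) √u) du` over
`[0, 1/9]`, whose antiderivative `u²/4 - (2/9) u² √u` is elementary.
-/

open intervalIntegral Set Real

lemma integral_three_halves_mul_one_sub_two_mul_mul_sub_sq (c a b : ℝ) :
    ∫ x in a..b, 3 / 2 * (1 - 2 * x) * (x - c) ^ 2
      = ((1 - 2 * c) * (b - c) ^ 3 / 2 - 3 * (b - c) ^ 4 / 4)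
        - ((1 - 2 * c) * (a - c) ^ 3 / 2 - 3 * (a - c) ^ 4 / 4) := by
  have hF (x : ℝ) : HasDerivAt (fun x => (1 - 2 * c) * (x - c) ^ 3 / 2 - 3 * (x - c) ^ 4 / 4)
      (3 / 2 * (1 - 2 * x) * (x - c) ^ 2) x := by
    have h := (hasDerivAt_id x).sub_const c
    exact ((((h.pow 3).const_mul (1 - 2 * c)).div_const 2).sub
      (((h.pow 4).const_mul 3).div_const 4)).congr_deriv (by simp only [id]; push_cast; ring)
  exact integral_eq_sub_of_hasDerivAt (fun x _ => hF x)
    (Continuous.intervalIntegrable (by fun_prop) _ _)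

lemma integral_mul_max_zero_sub_sq {f : ℝ → ℝ} (hf : Continuous f) {a b c : ℝ}
    (hac : a ≤ c) (hcb : c ≤ b) :
    ∫ x in a..b, f x * max 0 (x - c) ^ 2 = ∫ x in c..b, f x * (x - c) ^ 2 := by
  have hcont : Continuous fun x => f x * max 0 (x - c) ^ 2 := by fun_prop
  have hleft : ∫ x in a..c, f x * max 0 (x - c) ^ 2 = 0 := by
    rw [← integral_zero (a := a) (b := c) (μ := MeasureTheory.volume)]
    refine integral_congr fun x hx => ?_
    rw [uIcc_of_le hac] at hx
    simp [max_eq_left (sub_nonpos.2 hx.2)]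
  have hright : ∫ x in c..b, f x * max 0 (x - c) ^ 2 = ∫ x in c..b, f x * (x - c) ^ 2 := by
    refine integral_congr fun x hx => ?_
    rw [uIcc_of_le hcb] at hx
    simp [max_eq_right (sub_nonneg.2 hx.1)]
  rw [← integral_add_adjacent_intervals (hcont.intervalIntegrable a c)
    (hcont.intervalIntegrable c b), hleft, hright, zero_add]

lemma hasDerivAt_sq_mul_sqrt {u : ℝ} (hu : 0 < u) :
    HasDerivAt (fun u => u ^ 2 * √u) (5 / 2 * u * √u) u := by
  refine ((hasDerivAt_pow 2 u).mul (hasDerivAt_sqrt hu.ne')).congr_deriv ?_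
  have hs : √u ≠ 0 := (sqrt_pos.2 hu).ne'
  field_simp
  rw [sq_sqrt hu.le]
  push_cast
  ring

lemma integral_mul_sub_mul_sqrt (p q : ℝ) {a b : ℝ} (ha : 0 ≤ a) (hab : a ≤ b) :
    ∫ u in a..b, u * (p - q * √u)
      = (p * b ^ 2 / 2 - 2 * q / 5 * (b ^ 2 * √b))
        - (p * a ^ 2 / 2 - 2 * q / 5 * (a ^ 2 * √a)) := by
  have hF {u : ℝ} (hu : 0 < u) : HasDerivAt (fun u => p * u ^ 2 / 2 - 2 * q / 5 * (u ^ 2 * √u))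
      (u * (p - q * √u)) u :=
    ((((hasDerivAt_pow 2 u).const_mul p).div_const 2).sub
      ((hasDerivAt_sq_mul_sqrt hu).const_mul (2 * q / 5))).congr_deriv (by push_cast; ring)
  exact integral_eq_sub_of_hasDerivAt_of_le hab (by fun_prop) (fun u hu => hF (ha.trans_lt hu.1))
    (Continuous.intervalIntegrable (by fun_prop) _ _)

lemma integral_on_zero_four_ninths :
    ∫ x in (0 : ℝ)..(4 / 9), (3 / 2) * (1 - 2 * x) * (x ^ 2 + (max 0 (x - 1 / 3)) ^ 2)
      = 43 / 2916 := by
  have hsq := integral_three_halves_mul_one_sub_two_mul_mul_sub_sq 0 0 (4 / 9)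
  simp only [sub_zero] at hsq
  simp_rw [mul_add]
  rw [integral_add (Continuous.intervalIntegrable (by fun_prop) _ _)
      (Continuous.intervalIntegrable (by fun_prop) _ _), hsq,
    integral_mul_max_zero_sub_sq (f := fun x => 3 / 2 * (1 - 2 * x)) (by fun_prop)
      (by norm_num) (by norm_num),
    integral_three_halves_mul_one_sub_two_mul_mul_sub_sq]
  norm_num

lemma integral_on_four_ninths_one_half :
    ∫ x in (4 / 9 : ℝ)..(1 / 2), (1 - 2 * x) * (1 / 2 - (5 / 9) * √(1 - 2 * x))
      = 19 / 17496 := by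
  rw [integral_comp_sub_mul (fun u => u * (1 / 2 - 5 / 9 * √u)) two_ne_zero 1,
    integral_mul_sub_mul_sqrt _ _ (by norm_num) (by norm_num)]
  norm_num

theorem stmt_10 :
    24 * (∫ x in (0 : ℝ)..(4 / 9), (3 / 2) * (1 - 2 * x) * (x ^ 2 + (max 0 (x - 1 / 3)) ^ 2))
      + 24 * (∫ x in (4 / 9 : ℝ)..(1 / 2), (1 - 2 * x) * (1 / 2 - (5 / 9) * Real.sqrt (1 - 2 * x)))
      = 86 / 243 + 19 / 729 ∧ (86 / 243 + 19 / 729 : ℝ) = 277 / 729 := by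
  rw [integral_on_zero_four_ninths, integral_on_four_ninths_one_half]
  constructor <;> norm_num
end

section
/- Let π be a halfperiod of a simple allowable sequence Π on [n] and let 1 ≤ k < n/2. If s(k,π) denotes the minimum over all permutations π_i in π of the number of elements of the initial k-center C₀ that lie in the k-center of π_i, then s(k,π) ≤ n - 2k - 1. -/
/-- A halfperiod of a simple allowable sequence on `[n]`: a sequence of `C(n,2)+1`
permutations of `Fin n` (where `perm i j` is the element at position `j`), such that
consecutive permutations differ by a transposition of adjacent positions
(recorded by `trans`), and the last permutation is the reverse of the first. -/
structure Halfperiod (n : ℕ) where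
  perm : Fin (n.choose 2 + 1) → Equiv.Perm (Fin n)
  trans : Fin (n.choose 2) → ℕ
  trans_lt : ∀ i, trans i + 1 < n
  adjacent : ∀ i : Fin (n.choose 2),
    perm i.succ = perm i.castSucc *
      Equiv.swap ⟨trans i, Nat.lt_of_succ_lt (trans_lt i)⟩ ⟨trans i + 1, trans_lt i⟩
  reversal : ∀ j : Fin n, perm (Fin.last (n.choose 2)) j = perm 0 j.rev

/-- The `k`-center of a permutation: the set of elements occupying the middle
`n - 2k` positions. -/
def kCenter (n k : ℕ) (σ : Equiv.Perm (Fin n)) : Finset (Fin n) :=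
  (Finset.univ.filter (fun p : Fin n => k ≤ (p : ℕ) ∧ (p : ℕ) < n - k)).image σ

/-!
Follow the element `x` standing first in the initial permutation. An adjacent transposition
moves it by at most one position and, by the reversal property, it ends up last; so at some
moment it occupies position `k` and lies in the `k`-center, although it is not in `C₀`. At
that moment the `k`-center shares at most `n - 2k - 1` elements with `C₀`.
-/

theorem Fin.exists_eq_of_le_add_one :
    ∀ {N : ℕ} (f : Fin (N + 1) → ℕ) {k : ℕ}, f 0 ≤ k → k ≤ f (Fin.last N) →
      (∀ i : Fin N, f i.succ ≤ f i.castSucc + 1) → ∃ i, f i = k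
  | 0, _, _, h0, hN, _ => ⟨0, le_antisymm h0 hN⟩
  | N + 1, f, k, h0, hN, hstep => by
    by_cases hk : k ≤ f (Fin.last N).castSucc
    · obtain ⟨i, hi⟩ := exists_eq_of_le_add_one (f ∘ Fin.castSucc) h0 hk
        fun i => hstep i.castSucc
      exact ⟨i.castSucc, hi⟩
    · have hlast : f (Fin.last (N + 1)) ≤ f (Fin.last N).castSucc + 1 := hstep (Fin.last N)
      exact ⟨Fin.last (N + 1), by omega⟩

theorem Fin.val_swap_succ_le {n j : ℕ} (hj : j + 1 < n) (p : Fin n) :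
    (Equiv.swap (⟨j, by omega⟩ : Fin n) ⟨j + 1, hj⟩ p : ℕ) ≤ p + 1 := by
  rw [Equiv.swap_apply_def]
  split_ifs with h₁ h₂
  · simp only [Fin.ext_iff] at h₁ ⊢
    omega
  · simp only [Fin.ext_iff] at h₂ ⊢
    omega
  · omega

theorem mem_kCenter {n k : ℕ} {σ : Equiv.Perm (Fin n)} {x : Fin n} :
    x ∈ kCenter n k σ ↔ k ≤ (σ⁻¹ x : ℕ) ∧ (σ⁻¹ x : ℕ) < n - k := by
  simp only [kCenter, Finset.mem_image, Finset.mem_filter, Finset.mem_univ, true_and]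
  constructor
  · rintro ⟨p, hp, rfl⟩
    simpa using hp
  · exact fun h => ⟨σ⁻¹ x, h, by simp⟩

theorem card_kCenter (n k : ℕ) (σ : Equiv.Perm (Fin n)) :
    (kCenter n k σ).card = n - 2 * k := by
  have hval : (Finset.univ.filter (fun p : Fin n => k ≤ (p : ℕ) ∧ (p : ℕ) < n - k)).map
      Fin.valEmbedding = Finset.Ico k (n - k) := by
    ext m
    simp only [Finset.mem_map, Finset.mem_filter, Finset.mem_univ, true_and,
      Fin.valEmbedding_apply, Finset.mem_Ico]
    exact ⟨by rintro ⟨p, hp, rfl⟩; exact hp, fun hm => ⟨⟨m, by omega⟩, hm, rfl⟩⟩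
  rw [kCenter, Finset.card_image_of_injective _ σ.injective, ← Finset.card_map, hval,
    Nat.card_Ico]
  omega

theorem card_inter_kCenter_le {n k : ℕ} {σ τ : Equiv.Perm (Fin n)} {x : Fin n}
    (hσ : x ∉ kCenter n k σ) (hτ : x ∈ kCenter n k τ) :
    (kCenter n k σ ∩ kCenter n k τ).card ≤ n - 2 * k - 1 := by
  calc (kCenter n k σ ∩ kCenter n k τ).card
      ≤ ((kCenter n k τ).erase x).card := by
        refine Finset.card_le_card fun y hy => ?_
        obtain ⟨hyσ, hyτ⟩ := Finset.mem_inter.mp hy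
        exact Finset.mem_erase.mpr ⟨fun h => hσ (h ▸ hyσ), hyτ⟩
    _ = n - 2 * k - 1 := by rw [Finset.card_erase_of_mem hτ, card_kCenter]

namespace Halfperiod

variable {n : ℕ} (H : Halfperiod n)

theorem val_perm_succ_inv_le (i : Fin (n.choose 2)) (x : Fin n) :
    ((H.perm i.succ)⁻¹ x : ℕ) ≤ (H.perm i.castSucc)⁻¹ x + 1 := by
  rw [H.adjacent, mul_inv_rev, Equiv.swap_inv, Equiv.Perm.mul_apply]
  exact Fin.val_swap_succ_le (H.trans_lt i) _

theorem perm_last_inv_perm_zero (j : Fin n) :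
    (H.perm (Fin.last _))⁻¹ (H.perm 0 j) = j.rev := by
  rw [Equiv.Perm.inv_eq_iff_eq, H.reversal, Fin.rev_rev]

theorem exists_notMem_kCenter_zero_mem_kCenter {k : ℕ} (hk1 : 1 ≤ k) (hk2 : 2 * k < n) :
    ∃ i x, x ∉ kCenter n k (H.perm 0) ∧ x ∈ kCenter n k (H.perm i) := by
  set x := H.perm 0 ⟨0, by omega⟩
  have hx_zero : ((H.perm 0)⁻¹ x : ℕ) = 0 := by simp [x]
  have hx_last : ((H.perm (Fin.last _))⁻¹ x : ℕ) = n - 1 := by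
    simp [x, perm_last_inv_perm_zero]
  obtain ⟨i, hi⟩ := Fin.exists_eq_of_le_add_one (fun i => ((H.perm i)⁻¹ x : ℕ)) (k := k)
    (by omega) (by omega) (H.val_perm_succ_inv_le · x)
  refine ⟨i, x, fun hx => ?_, ?_⟩
  · rw [mem_kCenter, hx_zero] at hx
    omega
  · rw [mem_kCenter, hi]
    omega

end Halfperiod

theorem stmt_12 (n k : ℕ) (hk1 : 1 ≤ k) (hk2 : 2 * k < n) (H : Halfperiod n) :
    Finset.univ.inf'
        (Finset.univ_nonempty : (Finset.univ : Finset (Fin (n.choose 2 + 1))).Nonempty)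
        (fun i => ((kCenter n k (H.perm 0)) ∩ (kCenter n k (H.perm i))).card)
      ≤ n - 2 * k - 1 := by
  obtain ⟨i, x, hx₀, hxi⟩ := H.exists_notMem_kCenter_zero_mem_kCenter hk1 hk2
  exact (Finset.inf'_le _ (Finset.mem_univ i)).trans (card_inter_kCenter_le hx₀ hxi)
end

section
/- For every odd integer n ≥ 9, ⌊(2/3)·C(n,2) - (2/3)·L(n) + 1/3⌋ ≤ ⌊(n-3)(n+45)/18 + 1/9⌋, where L(n) = 3·C(k+2,2) + 3·C(k+2-⌊n/3⌋,2) - max(0, (k+1-⌊n/3⌋)(n-3⌊n/3⌋)) with k = (n-1)/2 - 3. -/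
/-!
After substituting `k = (n - 7) / 2` and writing `r = n - 3⌊n/3⌋`, the left-hand side is the
right-hand side plus `(r - 1)(r - 2)/9` (a polynomial identity), so the two agree unless
`3 ∣ n`. In that case `n = 6i + 3` and the two sides are `2i(i + 8) + 1/3` and `2i(i + 8) + 1/9`,
which have the same floor. So the bound holds with equality.
-/

lemma mul_nonneg_of_odd_of_nine_le {n k : ℤ} (hodd : Odd n) (hn : 9 ≤ n)
    (hk : k = (n - 1) / 2 - 3) : 0 ≤ (k + 1 - n / 3) * (n - 3 * (n / 3)) := by
  obtain ⟨t, rfl⟩ := hodd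
  rcases (by omega : 2 * t + 1 - 3 * ((2 * t + 1) / 3) = 0 ∨ 0 ≤ k + 1 - (2 * t + 1) / 3)
    with h | h
  · rw [h, mul_zero]
  · exact mul_nonneg h (by omega)

lemma two_thirds_sub_lowerBound_eq (n k m : ℚ) (hk : 2 * k = n - 7) :
    2 / 3 * (n * (n - 1) / 2)
        - 2 / 3 * (3 * C2 (k + 2) + 3 * C2 (k + 2 - m) - (k + 1 - m) * (n - 3 * m)) + 1 / 3
      = (n - 3) * (n + 45) / 18 + 1 / 9 + (n - 3 * m - 1) * (n - 3 * m - 2) / 9 := by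
  obtain rfl : k = (n - 7) / 2 := by linarith
  unfold C2
  ring

lemma floor_halving_bound_add_emod_three_eq {n : ℤ} (hodd : Odd n) :
    ⌊((n : ℚ) - 3) * ((n : ℚ) + 45) / 18 + 1 / 9
        + (((n % 3 : ℤ) : ℚ) - 1) * (((n % 3 : ℤ) : ℚ) - 2) / 9⌋
      = ⌊((n : ℚ) - 3) * ((n : ℚ) + 45) / 18 + 1 / 9⌋ := by
  rcases (by omega : n % 3 = 0 ∨ n % 3 = 1 ∨ n % 3 = 2) with h | h | h
  · obtain ⟨i, rfl⟩ : ∃ i, n = 6 * i + 3 := by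
      obtain ⟨t, rfl⟩ := hodd
      exact ⟨(t - 1) / 3, by omega⟩
    have hsplit (c : ℚ) :
        ((((6 * i + 3 : ℤ) : ℚ) - 3) * (((6 * i + 3 : ℤ) : ℚ) + 45) / 18 + c)
          = ((2 * i * (i + 8) : ℤ) : ℚ) + c := by
      push_cast; ring
    rw [h, add_assoc, hsplit, Int.floor_intCast_add, hsplit, Int.floor_intCast_add]
    norm_num [Int.floor_eq_zero_iff]
  all_goals rw [h]; norm_num

theorem stmt_18 (n : ℤ) (hodd : Odd n) (hn : 9 ≤ n) (k : ℤ) (hk : k = (n - 1) / 2 - 3)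
    (L : ℚ)
    (hL : L = 3 * C2 ((k : ℚ) + 2) + 3 * C2 ((k : ℚ) + 2 - (⌊(n : ℚ) / 3⌋ : ℚ))
        - max 0 (((k : ℚ) + 1 - (⌊(n : ℚ) / 3⌋ : ℚ)) * ((n : ℚ) - 3 * (⌊(n : ℚ) / 3⌋ : ℚ)))) :
    ⌊(2 / 3 : ℚ) * ((n : ℚ) * ((n : ℚ) - 1) / 2) - (2 / 3) * L + 1 / 3⌋
      ≤ ⌊(((n : ℚ) - 3) * ((n : ℚ) + 45)) / 18 + 1 / 9⌋ := by
  have hfloor : ⌊(n : ℚ) / 3⌋ = n / 3 := by simpa using Rat.floor_intCast_div_natCast n 3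
  have hk2 : 2 * (k : ℚ) = n - 7 := by
    obtain ⟨t, rfl⟩ := hodd
    exact_mod_cast (by omega : 2 * k = 2 * t + 1 - 7)
  have hmax : max 0 (((k : ℚ) + 1 - (n / 3 : ℤ)) * ((n : ℚ) - 3 * (n / 3 : ℤ)))
      = ((k : ℚ) + 1 - (n / 3 : ℤ)) * ((n : ℚ) - 3 * (n / 3 : ℤ)) :=
    max_eq_right (by exact_mod_cast mul_nonneg_of_odd_of_nine_le hodd hn hk)
  have hr : ((n % 3 : ℤ) : ℚ) = n - 3 * (n / 3 : ℤ) := by push_cast [Int.emod_def]; ring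
  rw [hL, hfloor, hmax, two_thirds_sub_lowerBound_eq _ _ _ hk2, ← hr]
  exact (floor_halving_bound_add_emod_three_eq hodd).le
end

section
/- For every even integer n ≥ 8, ⌊(1/2)·C(n,2) - (1/2)·L(n)⌋ ≤ ⌊n(n+30)/24 - 3⌋, where L(n) = 3·C(k+2,2) + 3·C(k+2-⌊n/3⌋,2) - max(0, (k+1-⌊n/3⌋)(n-3⌊n/3⌋)) with k = n/2 - 3. -/
theorem C2_add_C2_sub_eq (n k t : ℚ) (hk : k = n / 2 - 3) :
    3 * C2 (k + 2) + 3 * C2 (k + 2 - t)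
      = 5 * n ^ 2 / 12 - 3 * n + 6 + (n - 3 * t) * (n - 9 + (n - 3 * t)) / 6 := by
  subst hk; unfold C2; ring

theorem C2_add_C2_sub_sub_eq (n k t : ℚ) (hk : k = n / 2 - 3) :
    3 * C2 (k + 2) + 3 * C2 (k + 2 - t) - (k + 1 - t) * (n - 3 * t)
      = 5 * n ^ 2 / 12 - 3 * n + 6 + (n - 3 * t) * (3 - (n - 3 * t)) / 6 := by
  subst hk; unfold C2; ring

theorem le_C2_add_C2_sub_sub_max {n k t : ℚ} (hn : 8 ≤ n) (hk : k = n / 2 - 3)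
    (hr : n - 3 * t = 0 ∨ n - 3 * t = 1 ∨ n - 3 * t = 2) :
    5 * n ^ 2 / 12 - 3 * n + 6
      ≤ 3 * C2 (k + 2) + 3 * C2 (k + 2 - t) - max 0 ((k + 1 - t) * (n - 3 * t)) := by
  have hS := C2_add_C2_sub_eq n k t hk
  have hS' := C2_add_C2_sub_sub_eq n k t hk
  rw [le_sub_comm, max_le_iff]
  generalize n - 3 * t = r at hS hS' hr ⊢
  rcases hr with rfl | rfl | rfl <;> constructor <;> linarith

theorem stmt_19 (n : ℤ) (hev : Even n) (hn : 8 ≤ n) (k : ℤ) (hk : k = n / 2 - 3)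
    (L : ℚ)
    (hL : L = 3 * C2 ((k : ℚ) + 2) + 3 * C2 ((k : ℚ) + 2 - (⌊(n : ℚ) / 3⌋ : ℚ))
        - max 0 (((k : ℚ) + 1 - (⌊(n : ℚ) / 3⌋ : ℚ)) * ((n : ℚ) - 3 * (⌊(n : ℚ) / 3⌋ : ℚ)))) :
    ⌊(1 / 2 : ℚ) * ((n : ℚ) * ((n : ℚ) - 1) / 2) - (1 / 2) * L⌋
      ≤ ⌊((n : ℚ) * ((n : ℚ) + 30)) / 24 - 3⌋ := by
  apply Int.floor_mono
  have hkQ : (k : ℚ) = n / 2 - 3 := by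
    obtain ⟨m, rfl⟩ := hev
    rw [show k = m - 3 by omega]; push_cast; ring
  have hfloor : ⌊(n : ℚ) / 3⌋ = n / 3 := by simpa using Rat.floor_intCast_div_natCast n 3
  have hr : (n : ℚ) - 3 * ⌊(n : ℚ) / 3⌋ = 0 ∨ (n : ℚ) - 3 * ⌊(n : ℚ) / 3⌋ = 1
      ∨ (n : ℚ) - 3 * ⌊(n : ℚ) / 3⌋ = 2 := by
    rw [hfloor]; norm_cast; omega
  have hL_ge := le_C2_add_C2_sub_sub_max (by exact_mod_cast hn) hkQ hr
  rw [hL]; linarith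
end
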